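/- arXiv:2209.01159 — 2 statements merged into one kernel-verified Lean document; each statement's English description precedes it below -/
import Mathlib

section
/- Derivatives of the cost function at zero-padded points reduce to derivatives at the original point: for every p ≥ 1 and every (β⋆,γ⋆) ∈ ℝ^p × ℝ^p, (a) for 2 ≤ l ≤ p+1, ∂E_{p+1}/∂β_l evaluated at Γ^{p+1}(l,l) equals ∂E_p/∂β_{l-1} evaluated at (β⋆,γ⋆); (b) for 1 ≤ l ≤ p, ∂E_{p+1}/∂γ_l at Γ^{p+1}(l,l) equals ∂E_p/∂γ_l at (β⋆,γ⋆); (c) for 1 ≤ l ≤ p, ∂E_{p+1}/∂β_l at Γ^{p+1}(l,l+1) equals ∂E_p/∂β_l at (β⋆,γ⋆); (d) for 1 ≤ l ≤ p, ∂E_{p+1}/∂γ_{l+1} at Γ^{p+1}(l,l+1) equals ∂E_p/∂γ_l at (β⋆,γ⋆). -/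
open Matrix Complex

noncomputable section

/-- Computational basis index set for `n` qubits, identified with `Fin 2 ^ n` via binary digits. -/
abbrev QIdx (n : ℕ) := Fin n → Fin 2

/-- The Pauli X matrix. -/
def pauliX : Matrix (Fin 2) (Fin 2) ℂ := !![0, 1; 1, 0]

/-- The Pauli Z matrix. -/
def pauliZ : Matrix (Fin 2) (Fin 2) ℂ := !![1, 0; 0, -1]

/-- The `n`-fold Kronecker product with `M` in the `i`-th tensor factor and the 2×2 identity in
every other factor, realized as a matrix on `ℂ^(2^n)` with indices `Fin n → Fin 2`. -/
def pauliAt {n : ℕ} (M : Matrix (Fin 2) (Fin 2) ℂ) (i : Fin n) :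
    Matrix (QIdx n) (QIdx n) ℂ :=
  Matrix.of fun s t => ∏ j, if j = i then M (s j) (t j) else if s j = t j then 1 else 0

/-- `σ^x_i`. -/
def sigmaX {n : ℕ} (i : Fin n) : Matrix (QIdx n) (QIdx n) ℂ := pauliAt pauliX i

/-- `σ^z_i`. -/
def sigmaZ {n : ℕ} (i : Fin n) : Matrix (QIdx n) (QIdx n) ℂ := pauliAt pauliZ i

lemma sigmaZ_eq_diagonal {n : ℕ} (i : Fin n) :
    sigmaZ i = Matrix.diagonal (fun s => pauliZ (s i) (s i)) := by
  ext s t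
  simp only [sigmaZ, pauliAt, Matrix.of_apply, Matrix.diagonal_apply]
  by_cases h : s = t
  · subst h
    simp [Finset.prod_ite_eq']
  · rw [if_neg h]
    obtain ⟨j₀, hj₀⟩ := Function.ne_iff.mp h
    refine Finset.prod_eq_zero (Finset.mem_univ j₀) ?_
    by_cases hji : j₀ = i
    · subst hji
      rw [if_pos rfl]
      have hz : ∀ a b : Fin 2, a ≠ b → pauliZ a b = 0 := by
        intro a b hab
        fin_cases a <;> fin_cases b <;> simp_all [pauliZ]
      exact hz _ _ hj₀
    · rw [if_neg hji, if_neg hj₀]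

lemma sigmaZ_mul_comm {n : ℕ} (i j : Fin n) : sigmaZ i * sigmaZ j = sigmaZ j * sigmaZ i := by
  rw [sigmaZ_eq_diagonal, sigmaZ_eq_diagonal, Matrix.diagonal_mul_diagonal,
    Matrix.diagonal_mul_diagonal]
  ext s
  simp [mul_comm]

/-- The MaxCut Hamiltonian `H_C = Σ_{{i,j} ∈ E} σ^z_i σ^z_j`. -/
def hamC (n : ℕ) (G : SimpleGraph (Fin n)) [DecidableRel G.Adj] :
    Matrix (QIdx n) (QIdx n) ℂ :=
  ∑ e ∈ G.edgeFinset,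
    Sym2.lift ⟨fun i j => sigmaZ i * sigmaZ j, fun i j => sigmaZ_mul_comm i j⟩ e

/-- The mixing Hamiltonian `H_B = -Σ_i σ^x_i`. -/
def hamB (n : ℕ) : Matrix (QIdx n) (QIdx n) ℂ := -(∑ i : Fin n, sigmaX i)

/-- `U_B(β) = exp(-i β H_B)`. -/
def uB (n : ℕ) (β : ℝ) : Matrix (QIdx n) (QIdx n) ℂ :=
  NormedSpace.exp ((-(Complex.I) * (β : ℂ)) • hamB n)

/-- `U_C(γ) = exp(-i γ H_C)`. -/
def uC (n : ℕ) (G : SimpleGraph (Fin n)) [DecidableRel G.Adj] (γ : ℝ) :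
    Matrix (QIdx n) (QIdx n) ℂ :=
  NormedSpace.exp ((-(Complex.I) * (γ : ℂ)) • hamC n G)

/-- The plus state `|+⟩ = 2^{-n/2} (1,…,1)ᵀ`. -/
def plusState (n : ℕ) : QIdx n → ℂ := fun _ => ((Real.sqrt 2 : ℂ))⁻¹ ^ n

/-- The `m`-th layer `U_B(β_{m+1}) U_C(γ_{m+1})` of the QAOA circuit (`m` is 0-indexed);
`1` if `m` is out of range. -/
def qaoaLayer (n : ℕ) (G : SimpleGraph (Fin n)) [DecidableRel G.Adj] {p : ℕ}
    (β γ : Fin p → ℝ) (m : ℕ) : Matrix (QIdx n) (QIdx n) ℂ :=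
  if h : m < p then uB n (β ⟨m, h⟩) * uC n G (γ ⟨m, h⟩) else 1

/-- The ordered product of the (0-indexed) layers `a, a+1, …, a+len-1` of the QAOA circuit, with
higher layers acting later (to the left). -/
def uProd (n : ℕ) (G : SimpleGraph (Fin n)) [DecidableRel G.Adj] {p : ℕ}
    (β γ : Fin p → ℝ) (a len : ℕ) : Matrix (QIdx n) (QIdx n) ℂ :=
  (((List.range' a len).reverse).map (qaoaLayer n G β γ)).prod

/-- The depth-`p` QAOA state `|β,γ⟩ = U_B(β_p) U_C(γ_p) ⋯ U_B(β_1) U_C(γ_1) |+⟩`. -/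
def qaoaState (n : ℕ) (G : SimpleGraph (Fin n)) [DecidableRel G.Adj] {p : ℕ}
    (β γ : Fin p → ℝ) : QIdx n → ℂ :=
  (uProd n G β γ 0 p).mulVec (plusState n)

/-- The depth-`p` QAOA cost function `E_p(β,γ) = ⟨β,γ| H_C |β,γ⟩` as a real-valued function on
`ℝ^p × ℝ^p`. -/
def energyE (n : ℕ) (G : SimpleGraph (Fin n)) [DecidableRel G.Adj] (p : ℕ)
    (x : (Fin p → ℝ) × (Fin p → ℝ)) : ℝ :=
  (star (qaoaState n G x.1 x.2) ⬝ᵥ (hamC n G).mulVec (qaoaState n G x.1 x.2)).re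

/-- The point `Γ^{p+1}(i,j)` obtained from `(β⋆,γ⋆) ∈ ℝ^p × ℝ^p` by inserting a `0` at
position `i` in the `β`-part and at position `j` in the `γ`-part. -/
def padded {p : ℕ} (x : (Fin p → ℝ) × (Fin p → ℝ)) (i j : Fin (p + 1)) :
    (Fin (p + 1) → ℝ) × (Fin (p + 1) → ℝ) :=
  (i.insertNth 0 x.1, j.insertNth 0 x.2)

/-- The coordinate direction in `ℝ^p × ℝ^p` corresponding to `β_l` (`Sum.inl l`) or
`γ_l` (`Sum.inr l`). -/
def coordDir {p : ℕ} : Fin p ⊕ Fin p → (Fin p → ℝ) × (Fin p → ℝ) :=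
  Sum.elim (fun l => (Pi.single l 1, 0)) (fun l => (0, Pi.single l 1))

/-- Partial derivative of a real function on `ℝ^p × ℝ^p` in the coordinate direction `a`. -/
def pderiv' {p : ℕ} (f : ((Fin p → ℝ) × (Fin p → ℝ)) → ℝ)
    (a : Fin p ⊕ Fin p) (x : (Fin p → ℝ) × (Fin p → ℝ)) : ℝ :=
  fderiv ℝ f x (coordDir a)

/-- The Hessian matrix of a real function on `ℝ^p × ℝ^p`, with rows and columns indexed by the
coordinates `β_1,…,β_p` (`Sum.inl`) and `γ_1,…,γ_p` (`Sum.inr`). -/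
def hessian {p : ℕ} (f : ((Fin p → ℝ) × (Fin p → ℝ)) → ℝ)
    (x : (Fin p → ℝ) × (Fin p → ℝ)) : Matrix (Fin p ⊕ Fin p) (Fin p ⊕ Fin p) ℝ :=
  Matrix.of fun a b => pderiv' (pderiv' f b) a x

/-- The commutator `[A, B] = AB - BA`. -/
def commMat {n : ℕ} (A B : Matrix (QIdx n) (QIdx n) ℂ) : Matrix (QIdx n) (QIdx n) ℂ :=
  A * B - B * A

end

/-!
At `Γ^{p+1}(i,j)` two zero angles are inserted. Along the coordinate line of one of them, the other
contributes an identity gate `U_B(0) = 1` or `U_C(0) = 1`, and in the four configurations of the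
theorem the moving gate `U_B(t)` (resp. `U_C(t)`) then sits next to a gate of its own kind. Since
`U_B(a) U_B(b) = U_B(a + b)` (resp. `U_C`), the depth-`p+1` circuit on that line is the depth-`p`
circuit with the corresponding angle shifted by `t`. So `E_{p+1}` and `E_p` agree along the two
lines, and as both are differentiable, their partial derivatives are the derivatives along the
lines at `t = 0`.
-/
namespace Fin

variable {p : ℕ}

lemma succAbove_castSucc_of_ne {k m : Fin p} (h : m ≠ k) :
    k.castSucc.succAbove m = k.succ.succAbove m := by
  rcases h.lt_or_gt with h | h
  · rw [succAbove_castSucc_of_lt _ _ h, succAbove_succ_of_le _ _ h.le]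
  · rw [succAbove_castSucc_of_le _ _ h.le, succAbove_succ_of_lt _ _ h]

@[simp]
lemma insertNth_succ_apply_castSucc_self {α : Type*} (k : Fin p) (x : α) (f : Fin p → α) :
    (k.succ.insertNth x f : Fin (p + 1) → α) k.castSucc = f k := by
  rw [← succAbove_succ_self, insertNth_apply_succAbove]

@[simp]
lemma insertNth_castSucc_apply_succ_self {α : Type*} (k : Fin p) (x : α) (f : Fin p → α) :
    (k.castSucc.insertNth x f : Fin (p + 1) → α) k.succ = f k := by
  rw [← succAbove_castSucc_self, insertNth_apply_succAbove]

lemma insertNth_zero_add_smul_single {R : Type*} [Semiring R] (i : Fin (p + 1)) (f : Fin p → R)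
    (t : R) : (i.insertNth 0 f : Fin (p + 1) → R) + t • Pi.single i 1 = i.insertNth t f := by
  refine funext fun j => i.succAboveCases ?_ (fun m => ?_) j
  · simp
  · simp [succAbove_ne i m]

end Fin

theorem List.prod_reverse_ofFn_eq_of_mul_adjacent {M : Type*} [Monoid M] :
    ∀ {p : ℕ} (f : Fin (p + 1) → M) (g : Fin p → M) (k : Fin p),
      (∀ m ≠ k, f (k.succ.succAbove m) = g m) → f k.succ * f k.castSucc = g k →
      (List.ofFn f).reverse.prod = (List.ofFn g).reverse.prod
  | 0, _, _, k, _, _ => k.elim0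
  | p + 1, f, g, k, hne, hk => by
    rw [List.ofFn_succ, List.ofFn_succ (f := g)]
    simp only [List.reverse_cons, List.prod_append, List.prod_singleton]
    induction k using Fin.cases with
    | zero =>
      have htail : (fun m : Fin p => f m.succ.succ) = fun m => g m.succ :=
        funext fun m => by simpa using hne m.succ (Fin.succ_ne_zero m)
      rw [List.ofFn_succ, ← hk]
      simp only [List.reverse_cons, List.prod_append, List.prod_singleton, mul_assoc, htail]
      rfl
    | succ k =>
      have h0 : f 0 = g 0 := by simpa using hne 0 (Fin.succ_ne_zero k).symm
      have hk' : f k.succ.succ * f k.castSucc.succ = g k.succ := by rwa [← Fin.succ_castSucc] at hk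
      rw [h0, List.prod_reverse_ofFn_eq_of_mul_adjacent (fun m => f m.succ) (fun m => g m.succ) k
        (fun m hm => by simpa [Fin.succ_succAbove_succ] using hne m.succ (by simpa using hm)) hk']

section QAOA

variable {n p : ℕ} (G : SimpleGraph (Fin n)) [DecidableRel G.Adj]

lemma exp_neg_I_mul_smul_add {ι : Type*} [Fintype ι] [DecidableEq ι] (H : Matrix ι ι ℂ) (a b : ℝ) :
    NormedSpace.exp ((-I * ((a + b : ℝ) : ℂ)) • H) =
      NormedSpace.exp ((-I * a) • H) * NormedSpace.exp ((-I * b) • H) := by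
  rw [← Matrix.exp_add_of_commute _ _ (((Commute.refl H).smul_left _).smul_right _), ← add_smul]
  push_cast
  ring_nf

lemma uB_zero : uB n 0 = 1 := by simp [uB]

lemma uC_zero : uC n G 0 = 1 := by simp [uC]

lemma uB_add (a b : ℝ) : uB n (a + b) = uB n a * uB n b := exp_neg_I_mul_smul_add _ a b

lemma uC_add (a b : ℝ) : uC n G (a + b) = uC n G a * uC n G b := exp_neg_I_mul_smul_add _ a b

lemma uProd_zero_eq_prod_ofFn (β γ : Fin p → ℝ) :
    uProd n G β γ 0 p = (List.ofFn fun m => uB n (β m) * uC n G (γ m)).reverse.prod := by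
  rw [uProd, List.map_reverse, ← List.range_eq_range', List.ofFn_eq_map,
    ← List.map_coe_finRange_eq_range, List.map_map]
  congr 3
  funext m
  exact dif_pos m.isLt

lemma energyE_eq_of_mul_adjacent {β' γ' : Fin (p + 1) → ℝ} {β γ : Fin p → ℝ} (k : Fin p)
    (hβ : ∀ m ≠ k, β' (k.succ.succAbove m) = β m) (hγ : ∀ m ≠ k, γ' (k.succ.succAbove m) = γ m)
    (hk : uB n (β' k.succ) * uC n G (γ' k.succ) * (uB n (β' k.castSucc) * uC n G (γ' k.castSucc))
      = uB n (β k) * uC n G (γ k)) :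
    energyE n G (p + 1) (β', γ') = energyE n G p (β, γ) := by
  have hU : uProd n G β' γ' 0 (p + 1) = uProd n G β γ 0 p := by
    rw [uProd_zero_eq_prod_ofFn, uProd_zero_eq_prod_ofFn,
      List.prod_reverse_ofFn_eq_of_mul_adjacent _ _ k (fun m hm => by rw [hβ m hm, hγ m hm]) hk]
  simp only [energyE, qaoaState, hU]

variable (k : Fin p) (β γ : Fin p → ℝ) (t : ℝ)

lemma energyE_insertNth_succ_succ :
    energyE n G (p + 1) (k.succ.insertNth t β, k.succ.insertNth 0 γ) =
      energyE n G p (β + t • Pi.single k 1, γ) := by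
  refine energyE_eq_of_mul_adjacent G k (fun m hm => by simp [hm]) (fun m hm => by simp) ?_
  simp only [Fin.insertNth_apply_same, Fin.insertNth_succ_apply_castSucc_self, Pi.add_apply,
    Pi.smul_apply, Pi.single_eq_same, smul_eq_mul, mul_one]
  rw [uC_zero, mul_one, ← mul_assoc, ← uB_add, add_comm]

lemma energyE_insertNth_castSucc_castSucc :
    energyE n G (p + 1) (k.castSucc.insertNth 0 β, k.castSucc.insertNth t γ) =
      energyE n G p (β, γ + t • Pi.single k 1) := by
  refine energyE_eq_of_mul_adjacent G k (fun m hm => by simp [← Fin.succAbove_castSucc_of_ne hm])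
    (fun m hm => by simp [← Fin.succAbove_castSucc_of_ne hm, hm]) ?_
  simp only [Fin.insertNth_apply_same, Fin.insertNth_castSucc_apply_succ_self, Pi.add_apply,
    Pi.smul_apply, Pi.single_eq_same, smul_eq_mul, mul_one]
  rw [uB_zero, one_mul, mul_assoc, ← uC_add]

lemma energyE_insertNth_castSucc_succ_left :
    energyE n G (p + 1) (k.castSucc.insertNth t β, k.succ.insertNth 0 γ) =
      energyE n G p (β + t • Pi.single k 1, γ) := by
  refine energyE_eq_of_mul_adjacent G k
    (fun m hm => by simp [← Fin.succAbove_castSucc_of_ne hm, hm]) (fun m hm => by simp) ?_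
  simp only [Fin.insertNth_apply_same, Fin.insertNth_castSucc_apply_succ_self,
    Fin.insertNth_succ_apply_castSucc_self, Pi.add_apply, Pi.smul_apply, Pi.single_eq_same,
    smul_eq_mul, mul_one]
  rw [uC_zero, mul_one, ← mul_assoc, ← uB_add]

lemma energyE_insertNth_castSucc_succ_right :
    energyE n G (p + 1) (k.castSucc.insertNth 0 β, k.succ.insertNth t γ) =
      energyE n G p (β, γ + t • Pi.single k 1) := by
  refine energyE_eq_of_mul_adjacent G k
    (fun m hm => by simp [← Fin.succAbove_castSucc_of_ne hm]) (fun m hm => by simp [hm]) ?_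
  simp only [Fin.insertNth_apply_same, Fin.insertNth_castSucc_apply_succ_self,
    Fin.insertNth_succ_apply_castSucc_self, Pi.add_apply, Pi.smul_apply, Pi.single_eq_same,
    smul_eq_mul, mul_one]
  rw [uB_zero, one_mul, mul_assoc, ← uC_add, add_comm]

end QAOA

section Differentiability

attribute [local instance] Matrix.linftyOpNormedRing Matrix.linftyOpNormedAlgebra

variable {n p : ℕ} (G : SimpleGraph (Fin n)) [DecidableRel G.Adj]

lemma differentiable_exp_neg_I_mul_smul {ι : Type*} [Fintype ι] [DecidableEq ι]
    (H : Matrix ι ι ℂ) : Differentiable ℝ fun t : ℝ => NormedSpace.exp ((-I * t) • H) := by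
  have h (t : ℝ) : (-I * t) • H = t • (-I) • H := by
    rw [mul_comm, ← smul_smul, Complex.coe_smul]
  simp_rw [h]
  exact fun t => (hasDerivAt_exp_smul_const ((-I) • H) t).differentiableAt

lemma differentiable_qaoaState_apply (s : QIdx n) :
    Differentiable ℝ fun x : (Fin p → ℝ) × (Fin p → ℝ) => qaoaState n G x.1 x.2 s := by
  have hB : Differentiable ℝ (uB n) := differentiable_exp_neg_I_mul_smul _
  have hC : Differentiable ℝ (uC n G) := differentiable_exp_neg_I_mul_smul _
  have hU : Differentiable ℝ fun x : (Fin p → ℝ) × (Fin p → ℝ) => uProd n G x.1 x.2 0 p := by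
    simp_rw [uProd_zero_eq_prod_ofFn, List.ofFn_eq_map, ← List.map_reverse]
    exact fun x => (HasFDerivAt.list_prod' fun m _ =>
      ((hB.comp (by fun_prop)).mul (hC.comp (by fun_prop)) x).hasFDerivAt).differentiableAt
  simp only [qaoaState, Matrix.mulVec, dotProduct]
  fun_prop

lemma differentiable_energyE : Differentiable ℝ (energyE n G p) := by
  have := differentiable_qaoaState_apply (p := p) G
  unfold energyE Matrix.mulVec dotProduct
  fun_prop

end Differentiability

lemma pderiv'_eq_of_forall_add_smul {p q : ℕ} {f : (Fin p → ℝ) × (Fin p → ℝ) → ℝ}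
    {g : (Fin q → ℝ) × (Fin q → ℝ) → ℝ} {x : (Fin p → ℝ) × (Fin p → ℝ)}
    {y : (Fin q → ℝ) × (Fin q → ℝ)} (hf : DifferentiableAt ℝ f x) (hg : DifferentiableAt ℝ g y)
    {a : Fin p ⊕ Fin p} {b : Fin q ⊕ Fin q}
    (h : ∀ t : ℝ, f (x + t • coordDir a) = g (y + t • coordDir b)) :
    pderiv' f a x = pderiv' g b y := by
  rw [pderiv', pderiv', ← hf.lineDeriv_eq_fderiv, ← hg.lineDeriv_eq_fderiv, lineDeriv,
    lineDeriv]
  simp_rw [h]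

lemma padded_add_smul_coordDir_inl {p : ℕ} (x : (Fin p → ℝ) × (Fin p → ℝ)) (i j : Fin (p + 1))
    (t : ℝ) : padded x i j + t • coordDir (Sum.inl i) = (i.insertNth t x.1, j.insertNth 0 x.2) := by
  simp [padded, coordDir, Fin.insertNth_zero_add_smul_single]

lemma padded_add_smul_coordDir_inr {p : ℕ} (x : (Fin p → ℝ) × (Fin p → ℝ)) (i j : Fin (p + 1))
    (t : ℝ) : padded x i j + t • coordDir (Sum.inr j) = (i.insertNth 0 x.1, j.insertNth t x.2) := by
  simp [padded, coordDir, Fin.insertNth_zero_add_smul_single]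

lemma add_smul_coordDir_inl {p : ℕ} (x : (Fin p → ℝ) × (Fin p → ℝ)) (k : Fin p) (t : ℝ) :
    x + t • coordDir (Sum.inl k) = (x.1 + t • Pi.single k 1, x.2) := by
  simp [coordDir, Prod.ext_iff]

lemma add_smul_coordDir_inr {p : ℕ} (x : (Fin p → ℝ) × (Fin p → ℝ)) (k : Fin p) (t : ℝ) :
    x + t • coordDir (Sum.inr k) = (x.1, x.2 + t • Pi.single k 1) := by
  simp [coordDir, Prod.ext_iff]

theorem stmt2_general (n : ℕ) (G : SimpleGraph (Fin n)) [DecidableRel G.Adj]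
    (p : ℕ) (β γ : Fin p → ℝ) :
    (∀ k : Fin p,
      pderiv' (energyE n G (p + 1)) (Sum.inl k.succ) (padded (β, γ) k.succ k.succ) =
        pderiv' (energyE n G p) (Sum.inl k) (β, γ)) ∧
    (∀ k : Fin p,
      pderiv' (energyE n G (p + 1)) (Sum.inr k.castSucc) (padded (β, γ) k.castSucc k.castSucc) =
        pderiv' (energyE n G p) (Sum.inr k) (β, γ)) ∧
    (∀ k : Fin p,
      pderiv' (energyE n G (p + 1)) (Sum.inl k.castSucc) (padded (β, γ) k.castSucc k.succ) =
        pderiv' (energyE n G p) (Sum.inl k) (β, γ)) ∧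
    (∀ k : Fin p,
      pderiv' (energyE n G (p + 1)) (Sum.inr k.succ) (padded (β, γ) k.castSucc k.succ) =
        pderiv' (energyE n G p) (Sum.inr k) (β, γ)) := by
  refine ⟨fun k => ?_, fun k => ?_, fun k => ?_, fun k => ?_⟩ <;>
    refine pderiv'_eq_of_forall_add_smul (differentiable_energyE G _) (differentiable_energyE G _)
      fun t => ?_
  · rw [padded_add_smul_coordDir_inl, add_smul_coordDir_inl]
    exact energyE_insertNth_succ_succ G k β γ t
  · rw [padded_add_smul_coordDir_inr, add_smul_coordDir_inr]
    exact energyE_insertNth_castSucc_castSucc G k β γ t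
  · rw [padded_add_smul_coordDir_inl, add_smul_coordDir_inl]
    exact energyE_insertNth_castSucc_succ_left G k β γ t
  · rw [padded_add_smul_coordDir_inr, add_smul_coordDir_inr]
    exact energyE_insertNth_castSucc_succ_right G k β γ t

/-- derivatives of the cost function at zero-padded points reduce to derivatives at
the original point. -/
theorem stmt2 (n : ℕ) (hn : 1 ≤ n) (G : SimpleGraph (Fin n)) [DecidableRel G.Adj]
    (p : ℕ) (hp : 1 ≤ p) (β γ : Fin p → ℝ) :
    (∀ k : Fin p,
      pderiv' (energyE n G (p + 1)) (Sum.inl k.succ) (padded (β, γ) k.succ k.succ) =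
        pderiv' (energyE n G p) (Sum.inl k) (β, γ)) ∧
    (∀ k : Fin p,
      pderiv' (energyE n G (p + 1)) (Sum.inr k.castSucc) (padded (β, γ) k.castSucc k.castSucc) =
        pderiv' (energyE n G p) (Sum.inr k) (β, γ)) ∧
    (∀ k : Fin p,
      pderiv' (energyE n G (p + 1)) (Sum.inl k.castSucc) (padded (β, γ) k.castSucc k.succ) =
        pderiv' (energyE n G p) (Sum.inl k) (β, γ)) ∧
    (∀ k : Fin p,
      pderiv' (energyE n G (p + 1)) (Sum.inr k.succ) (padded (β, γ) k.castSucc k.succ) =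
        pderiv' (energyE n G p) (Sum.inr k) (β, γ)) :=
  stmt2_general n G p β γ
end

section
/- π-periodicity of the QAOA cost function in every individual angle: for every p ≥ 1, every (β,γ) ∈ ℝ^p × ℝ^p and every 1 ≤ l ≤ p, replacing β_l by β_l + π leaves E_p unchanged, and replacing γ_l by γ_l + π leaves E_p unchanged. -/
open Matrix Complex

/-! Both Hamiltonians are sums of pairwise commuting involutions (`σ^x_i`, resp. `σ^z_i σ^z_j`),
and `exp (-iπA) = cos π + i sin π · A = -1` for an involution `A`. Hence
`U_B(β + π) = (-1)^n U_B(β)` and `U_C(γ + π) = (-1)^|E| U_C(γ)`: shifting a single angle by `π`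
only multiplies the QAOA state by a global sign, which the expectation value does not see. -/

section Involution

variable {𝔸 : Type*} [Ring 𝔸] [Algebra ℂ 𝔸] [TopologicalSpace 𝔸] [IsTopologicalRing 𝔸]
  [ContinuousSMul ℂ 𝔸] [T2Space 𝔸] {a : 𝔸}

theorem exp_smul_of_mul_self_eq_one (ha : a * a = 1) (z : ℂ) :
    NormedSpace.exp (z • a) = cosh z • 1 + sinh z • a := by
  have hpow : ∀ k, a ^ (2 * k) = 1 := fun k => by rw [pow_mul, sq, ha, one_pow]
  rw [NormedSpace.exp_eq_tsum ℂ]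
  refine HasSum.tsum_eq (HasSum.even_add_odd ?_ ?_)
  · convert (hasSum_cosh z).smul_const (1 : 𝔸) using 2 with k
    rw [smul_pow, hpow, smul_smul, div_eq_inv_mul]
  · convert (hasSum_sinh z).smul_const a using 2 with k
    rw [smul_pow, pow_succ a, hpow, one_mul, smul_smul, div_eq_inv_mul]

theorem exp_neg_I_mul_pi_smul_of_mul_self_eq_one (ha : a * a = 1) :
    NormedSpace.exp ((-I * Real.pi) • a) = -1 := by
  have hz : -I * Real.pi = ((-Real.pi : ℝ) : ℂ) * I := by push_cast; ring
  rw [exp_smul_of_mul_self_eq_one ha, hz, cosh_mul_I, sinh_mul_I, ← ofReal_cos, ← ofReal_sin,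
    Real.cos_neg, Real.sin_neg, Real.cos_pi, Real.sin_pi]
  simp

end Involution

theorem Matrix.exp_neg_I_mul_pi_smul_sum {m ι : Type*} [Fintype m] [DecidableEq m]
    (s : Finset ι) (f : ι → Matrix m m ℂ)
    (hcomm : (s : Set ι).Pairwise (Function.onFun Commute f))
    (hinv : ∀ i ∈ s, f i * f i = 1) :
    NormedSpace.exp ((-I * Real.pi) • ∑ i ∈ s, f i) = (-1 : ℂ) ^ s.card • 1 := by
  rw [Finset.smul_sum, Matrix.exp_sum_of_commute s _
      (hcomm.mono' fun i j h => (h.smul_left _).smul_right _)]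
  refine (Finset.noncommProd_eq_pow_card _ _ _ (-1)
    fun i hi => exp_neg_I_mul_pi_smul_of_mul_self_eq_one (hinv i hi)).trans ?_
  rw [← neg_one_smul ℂ (1 : Matrix m m ℂ), smul_pow, one_pow]

theorem Matrix.exp_neg_I_mul_add_pi_smul {m : Type*} [Fintype m] [DecidableEq m]
    {H : Matrix m m ℂ} {c : ℂ} (h : NormedSpace.exp ((-I * Real.pi) • H) = c • 1) (t : ℝ) :
    NormedSpace.exp ((-I * ↑(t + Real.pi)) • H) = c • NormedSpace.exp ((-I * t) • H) := by
  rw [ofReal_add, mul_add, add_smul, add_comm, Matrix.exp_add_of_commute _ _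
    (((Commute.refl H).smul_left _).smul_right _), h, smul_one_mul]

namespace Matrix

variable {ι R : Type*} [Fintype ι] [CommSemiring R] {m : ι → Type*}

def piKronecker (A : ∀ i, Matrix (m i) (m i) R) : Matrix (∀ i, m i) (∀ i, m i) R :=
  of fun s t => ∏ i, A i (s i) (t i)

theorem piKronecker_mul [DecidableEq ι] [∀ i, Fintype (m i)] (A B : ∀ i, Matrix (m i) (m i) R) :
    piKronecker A * piKronecker B = piKronecker (A * B) := by
  ext s u
  simp only [piKronecker, mul_apply, of_apply, Pi.mul_apply, ← Finset.prod_mul_distrib,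
    Fintype.prod_sum]

theorem piKronecker_one [∀ i, DecidableEq (m i)] :
    piKronecker (1 : ∀ i, Matrix (m i) (m i) R) = 1 := by
  ext s t
  simp [piKronecker, one_apply, Fintype.prod_boole, funext_iff]

theorem commute_piKronecker [DecidableEq ι] [∀ i, Fintype (m i)]
    {A B : ∀ i, Matrix (m i) (m i) R} (h : ∀ i, Commute (A i) (B i)) :
    Commute (piKronecker A) (piKronecker B) := by
  rw [Commute, SemiconjBy, piKronecker_mul, piKronecker_mul]
  exact congrArg piKronecker (funext h)

end Matrix

section Pauli

variable {n : ℕ}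

theorem pauliAt_eq_piKronecker (M : Matrix (Fin 2) (Fin 2) ℂ) (i : Fin n) :
    pauliAt M i = Matrix.piKronecker (Function.update 1 i M) := by
  ext s t
  simp only [pauliAt, Matrix.piKronecker, Matrix.of_apply, Function.update_apply]
  refine Finset.prod_congr rfl fun j _ => ?_
  split_ifs <;> simp_all [Matrix.one_apply]

theorem pauliAt_mul_self {M : Matrix (Fin 2) (Fin 2) ℂ} (hM : M * M = 1) (i : Fin n) :
    pauliAt M i * pauliAt M i = 1 := by
  rw [pauliAt_eq_piKronecker, Matrix.piKronecker_mul, ← Function.update_mul, hM, one_mul]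
  exact (congrArg _ (Function.update_eq_self_iff.mpr rfl)).trans Matrix.piKronecker_one

theorem commute_pauliAt (M N : Matrix (Fin 2) (Fin 2) ℂ) {i j : Fin n} (hij : i ≠ j) :
    Commute (pauliAt M i) (pauliAt N j) := by
  rw [pauliAt_eq_piKronecker, pauliAt_eq_piKronecker]
  refine Matrix.commute_piKronecker fun k => ?_
  by_cases hki : k = i
  · subst hki
    simp [Function.update_of_ne hij]
  · simp [Function.update_of_ne hki]

theorem pauliX_mul_self : pauliX * pauliX = 1 := by
  simp [pauliX, Matrix.one_fin_two]

theorem pauliZ_mul_self : pauliZ * pauliZ = 1 := by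
  simp [pauliZ, Matrix.one_fin_two]

end Pauli

section Hamiltonians

variable {n : ℕ}

theorem commute_sigmaZ (i j : Fin n) : Commute (sigmaZ i) (sigmaZ j) :=
  sigmaZ_mul_comm i j

theorem sigmaZ_mul_self (i : Fin n) : sigmaZ i * sigmaZ i = 1 :=
  pauliAt_mul_self pauliZ_mul_self i

def zzTerm (e : Sym2 (Fin n)) : Matrix (QIdx n) (QIdx n) ℂ :=
  Sym2.lift ⟨fun i j => sigmaZ i * sigmaZ j, fun i j => sigmaZ_mul_comm i j⟩ e

theorem zzTerm_mul_self (e : Sym2 (Fin n)) : zzTerm e * zzTerm e = 1 := by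
  induction e using Sym2.ind with
  | _ i j =>
    simp only [zzTerm, Sym2.lift_mk]
    rw [(commute_sigmaZ j i).mul_mul_mul_comm, sigmaZ_mul_self, sigmaZ_mul_self, one_mul]

theorem commute_zzTerm (e e' : Sym2 (Fin n)) : Commute (zzTerm e) (zzTerm e') := by
  induction e using Sym2.ind with
  | _ i j =>
    induction e' using Sym2.ind with
    | _ k l =>
      simp only [zzTerm, Sym2.lift_mk]
      exact ((commute_sigmaZ i k).mul_right (commute_sigmaZ i l)).mul_left
        ((commute_sigmaZ j k).mul_right (commute_sigmaZ j l))

theorem exp_neg_I_mul_pi_smul_hamB :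
    NormedSpace.exp ((-I * Real.pi) • hamB n) = (-1 : ℂ) ^ n • 1 := by
  rw [hamB, ← Finset.sum_neg_distrib, Matrix.exp_neg_I_mul_pi_smul_sum, Finset.card_univ,
    Fintype.card_fin]
  · exact fun i _ j _ hij => ((commute_pauliAt _ _ hij).neg_left).neg_right
  · exact fun i _ => by rw [neg_mul_neg, sigmaX, pauliAt_mul_self pauliX_mul_self]

theorem exp_neg_I_mul_pi_smul_hamC (G : SimpleGraph (Fin n)) [DecidableRel G.Adj] :
    NormedSpace.exp ((-I * Real.pi) • hamC n G) = (-1 : ℂ) ^ G.edgeFinset.card • 1 :=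
  Matrix.exp_neg_I_mul_pi_smul_sum _ zzTerm (fun e _ e' _ _ => commute_zzTerm e e')
    fun e _ => zzTerm_mul_self e

theorem uB_add_pi (β : ℝ) : uB n (β + Real.pi) = (-1 : ℂ) ^ n • uB n β :=
  Matrix.exp_neg_I_mul_add_pi_smul exp_neg_I_mul_pi_smul_hamB β

theorem uC_add_pi (G : SimpleGraph (Fin n)) [DecidableRel G.Adj] (γ : ℝ) :
    uC n G (γ + Real.pi) = (-1 : ℂ) ^ G.edgeFinset.card • uC n G γ :=
  Matrix.exp_neg_I_mul_add_pi_smul (exp_neg_I_mul_pi_smul_hamC G) γ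

end Hamiltonians

theorem List.prod_map_smul_eq_smul_prod {α R M : Type*} [CommSemiring R] [Semiring M]
    [Algebra R M] (xs : List α) (c : α → R) (f : α → M) :
    (xs.map fun x => c x • f x).prod = (xs.map c).prod • (xs.map f).prod := by
  induction xs with
  | nil => simp
  | cons x xs ih => simp only [List.map_cons, List.prod_cons, ih, smul_mul_smul_comm]

theorem Matrix.star_smul_dotProduct_mulVec_smul {m : Type*} [Fintype m] {c : ℂ}
    (hc : star c * c = 1) (A : Matrix m m ℂ) (v : m → ℂ) :
    star (c • v) ⬝ᵥ A *ᵥ (c • v) = star v ⬝ᵥ A *ᵥ v := by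
  rw [mulVec_smul, star_smul, smul_dotProduct, dotProduct_smul, smul_smul, hc, one_smul]

section Circuit

variable {n : ℕ} (G : SimpleGraph (Fin n)) [DecidableRel G.Adj] {p : ℕ}

theorem uProd_eq_smul {β γ β' γ' : Fin p → ℝ} {l : Fin p} {c : ℂ}
    (h : ∀ m, qaoaLayer n G β' γ' m = (if m = l.val then c else 1) • qaoaLayer n G β γ m) :
    uProd n G β' γ' 0 p = c • uProd n G β γ 0 p := by
  have hcount : (List.range' 0 p).reverse.count l.val = 1 := by
    rw [List.count_reverse, List.count_eq_one_of_mem List.nodup_range' (by simp)]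
  rw [uProd, funext h, List.prod_map_smul_eq_smul_prod,
    List.prod_map_eq_pow_single l.val _ fun m hm _ => if_neg hm, if_pos rfl, hcount, pow_one,
    uProd]

theorem qaoaLayer_update_beta_add_pi (β γ : Fin p → ℝ) (l : Fin p) (m : ℕ) :
    qaoaLayer n G (Function.update β l (β l + Real.pi)) γ m
      = (if m = l.val then (-1 : ℂ) ^ n else 1) • qaoaLayer n G β γ m := by
  unfold qaoaLayer
  split_ifs with hm hml hml
  · obtain rfl : (⟨m, hm⟩ : Fin p) = l := Fin.ext hml
    rw [Function.update_self, uB_add_pi, smul_mul_assoc]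
  · rw [Function.update_of_ne (Fin.ne_of_val_ne hml), one_smul]
  · exact absurd (hml ▸ l.isLt) hm
  · rw [one_smul]

theorem qaoaLayer_update_gamma_add_pi (β γ : Fin p → ℝ) (l : Fin p) (m : ℕ) :
    qaoaLayer n G β (Function.update γ l (γ l + Real.pi)) m
      = (if m = l.val then (-1 : ℂ) ^ G.edgeFinset.card else 1) • qaoaLayer n G β γ m := by
  unfold qaoaLayer
  split_ifs with hm hml hml
  · obtain rfl : (⟨m, hm⟩ : Fin p) = l := Fin.ext hml
    rw [Function.update_self, uC_add_pi, mul_smul_comm]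
  · rw [Function.update_of_ne (Fin.ne_of_val_ne hml), one_smul]
  · exact absurd (hml ▸ l.isLt) hm
  · rw [one_smul]

theorem energyE_eq_of_qaoaState_eq_neg_one_pow_smul {β γ β' γ' : Fin p → ℝ} (k : ℕ)
    (h : qaoaState n G β' γ' = (-1 : ℂ) ^ k • qaoaState n G β γ) :
    energyE n G p (β', γ') = energyE n G p (β, γ) := by
  have hk : star ((-1 : ℂ) ^ k) * (-1) ^ k = 1 := by
    rw [star_pow, star_neg, star_one, ← mul_pow, neg_one_mul, neg_neg, one_pow]
  simp only [energyE, h, Matrix.star_smul_dotProduct_mulVec_smul hk]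

end Circuit

theorem stmt14_general (n : ℕ) (G : SimpleGraph (Fin n)) [DecidableRel G.Adj]
    (p : ℕ) (β γ : Fin p → ℝ) (l : Fin p) :
    energyE n G p (Function.update β l (β l + Real.pi), γ) = energyE n G p (β, γ) ∧
    energyE n G p (β, Function.update γ l (γ l + Real.pi)) = energyE n G p (β, γ) := by
  constructor
  · refine energyE_eq_of_qaoaState_eq_neg_one_pow_smul G n ?_
    rw [qaoaState, uProd_eq_smul G (qaoaLayer_update_beta_add_pi G β γ l), Matrix.smul_mulVec,
      qaoaState]
  · refine energyE_eq_of_qaoaState_eq_neg_one_pow_smul G G.edgeFinset.card ?_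
    rw [qaoaState, uProd_eq_smul G (qaoaLayer_update_gamma_add_pi G β γ l), Matrix.smul_mulVec,
      qaoaState]

/-- π-periodicity of the QAOA cost function in every individual angle. -/
theorem stmt14 (n : ℕ) (hn : 1 ≤ n) (G : SimpleGraph (Fin n)) [DecidableRel G.Adj]
    (p : ℕ) (hp : 1 ≤ p) (β γ : Fin p → ℝ) (l : Fin p) :
    energyE n G p (Function.update β l (β l + Real.pi), γ) = energyE n G p (β, γ) ∧
    energyE n G p (β, Function.update γ l (γ l + Real.pi)) = energyE n G p (β, γ) :=
  stmt14_general n G p β γ l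
end
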